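/- For every integer m and nonnegative integer k: 2·∑_{j=0}^{k} j·T_{j+m} = −T_{m−2} + 3·T_{m+1} + (k−1)·T_{k+m−1} + (2k−1)·T_{k+m} + (k−2)·T_{k+m+1}. -/

import Mathlib

/-- Tribonacci numbers on the naturals. -/
def tribN : ℕ → ℤ
  | 0 => 0
  | 1 => 1
  | 2 => 1
  | n + 3 => tribN (n + 2) + tribN (n + 1) + tribN n

/-- Tribonacci at negative indices: `tribNeg n = T (-n)`, via `T (-n) = 2·T (3-n) - T (4-n)`. -/
def tribNeg : ℕ → ℤ
  | 0 => tribN 0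
  | 1 => 2 * tribN 2 - tribN 3
  | 2 => 2 * tribN 1 - tribN 2
  | 3 => 2 * tribN 0 - tribN 1
  | 4 => 2 * tribNeg 1 - tribN 0
  | n + 5 => 2 * tribNeg (n + 2) - tribNeg (n + 1)

/-- Tribonacci sequence extended to all integers. -/
def T (m : ℤ) : ℤ := if 0 ≤ m then tribN m.toNat else tribNeg (-m).toNat

/-! The identity holds for every sequence on `ℤ` satisfying the Tribonacci recurrence: by induction
on `k`, each step adds `2 (k + 1) f (k + 1 + m)` and the recurrence at `k + m - 1` absorbs it.
The extension of `T` to negative indices satisfies the recurrence everywhere, because the backward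
rule `T m = 2 T (m + 3) - T (m + 4)` is the recurrence at `m` rewritten with the one at `m + 1`. -/

open Finset

theorem two_mul_sum_mul_eq_of_tribonacci {R : Type*} [CommRing R] (f : ℤ → R)
    (hf : ∀ n, f (n + 3) = f (n + 2) + f (n + 1) + f n) (m : ℤ) (k : ℕ) :
    2 * ∑ j ∈ range (k + 1), (j : R) * f (j + m) =
      -f (m - 2) + 3 * f (m + 1) + ((k : R) - 1) * f (k + m - 1) +
        (2 * (k : R) - 1) * f (k + m) + ((k : R) - 2) * f (k + m + 1) := by
  induction k with
  | zero =>
    simp only [sum_range_one, Nat.cast_zero, zero_mul, mul_zero, zero_add]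
    linear_combination (norm := ring_nf) -hf (m - 2)
  | succ k ih =>
    rw [sum_range_succ, mul_add, ih]
    have h := hf (k + m - 1)
    push_cast
    linear_combination (norm := ring_nf) (1 - (k : R)) * h

lemma T_natCast (n : ℕ) : T n = tribN n := by simp [T]

lemma T_neg_natCast (n : ℕ) : T (-n) = tribNeg n := by
  cases n with
  | zero => rfl
  | succ n =>
    rw [T, if_neg (by omega)]
    simp

lemma T_add_three_of_nonneg {m : ℤ} (hm : 0 ≤ m) : T (m + 3) = T (m + 2) + T (m + 1) + T m := by
  lift m to ℕ using hm
  have h : T (m + 3 : ℕ) = T (m + 2 : ℕ) + T (m + 1 : ℕ) + T m := by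
    simp only [T_natCast, tribN]
  exact_mod_cast h

lemma T_eq_two_mul_sub (m : ℤ) : T m = 2 * T (m + 3) - T (m + 4) := by
  rcases le_or_gt 0 m with hm | hm
  · have h₀ := T_add_three_of_nonneg hm
    have h₁ := T_add_three_of_nonneg (m := m + 1) (by omega)
    ring_nf at h₀ h₁ ⊢
    linear_combination h₁ - h₀
  obtain ⟨n, rfl⟩ : ∃ n : ℕ, m = -(n + 1 : ℕ) := ⟨(-m - 1).toNat, by omega⟩
  match n with
  | 0 | 1 | 2 | 3 => decide
  | n + 4 =>
    have h₃ : -((n + 4 + 1 : ℕ) : ℤ) + 3 = -(n + 2 : ℕ) := by push_cast; ring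
    have h₄ : -((n + 4 + 1 : ℕ) : ℤ) + 4 = -(n + 1 : ℕ) := by push_cast; ring
    rw [h₃, h₄, T_neg_natCast, T_neg_natCast, T_neg_natCast]
    rfl

lemma T_add_three (m : ℤ) : T (m + 3) = T (m + 2) + T (m + 1) + T m := by
  induction m using Int.induction_on with
  | zero => exact T_add_three_of_nonneg le_rfl
  | succ n _ => exact T_add_three_of_nonneg (by omega)
  | pred n ih =>
    have h := T_eq_two_mul_sub (-n - 1)
    ring_nf at h ih ⊢
    linear_combination ih - h

theorem stmt13 : ∀ (m : ℤ) (k : ℕ),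
    2 * ∑ j ∈ Finset.range (k + 1), (j : ℤ) * T (j + m) =
      -T (m - 2) + 3 * T (m + 1) + ((k : ℤ) - 1) * T (k + m - 1) +
        (2 * (k : ℤ) - 1) * T (k + m) + ((k : ℤ) - 2) * T (k + m + 1) :=
  two_mul_sum_mul_eq_of_tribonacci T T_add_three
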